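/- arXiv:math/0608536 — 8 statements merged into one kernel-verified Lean document; each statement's English description precedes it below -/
import Mathlib

section
/- Assume hypotheses H0, H1, H2. Then (G, β, δ) is a conical group; explicitly, for all x, y, z in G and all η > 0: β(x, β(y, z)) = β(β(x, y), z); β(x, e) = β(e, x) = x; β(x, x⁻¹) = β(x⁻¹, x) = e; and β(δ_η x, δ_η y) = δ_η β(x, y). -/
open Filter Topology

/-!
For `ε > 0` the bijection `δ ε⁻¹` transports the group law of `G` to the isomorphic law
`x ⋆ε y = δ ε⁻¹ (δ ε x * δ ε y)`, with neutral element `δ ε⁻¹ 1` and inverses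
`δ ε⁻¹ (δ ε x)⁻¹`; so every identity of a conical group holds exactly for `⋆ε`, and `δ η`
carries `⋆(η ε)` to `⋆ε`. Because `⋆ε → β` uniformly on compact sets and `β` is therefore
continuous, `aε ⋆ε bε → β x y` whenever `aε → x` and `bε → y`, and each identity passes to the
limit `ε → 0`. The one limit not supplied by a hypothesis is `δ ε⁻¹ 1 → 1`: the limit `β 1 1` of
`1 ⋆ε (δ ε⁻¹ (δ ε 1)⁻¹) = δ ε⁻¹ 1` is fixed by every `δ η`, hence equals
`lim_{η → 0} δ η (β 1 1) = 1` by H0.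
-/

structure IsDilationFamily {G : Type*} (δ : ℝ → G → G) : Prop where
  comp : ∀ ε μ : ℝ, 0 < ε → 0 < μ → ∀ x : G, δ ε (δ μ x) = δ (ε * μ) x
  one : ∀ x : G, δ 1 x = x

theorem tendsto_const_mul_nhdsGT_zero {η : ℝ} (hη : 0 < η) :
    Tendsto (η * ·) (𝓝[>] (0 : ℝ)) (𝓝[>] 0) :=
  tendsto_iff_comap.2 (comap_mulLeft_nhdsGT_zero hη).ge

section Rescaled

variable {G : Type*} [Group G]

noncomputable def rescaledMul (δ : ℝ → G → G) (ε : ℝ) (x y : G) : G := δ ε⁻¹ (δ ε x * δ ε y)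

noncomputable def rescaledOne (δ : ℝ → G → G) (ε : ℝ) : G := δ ε⁻¹ 1

noncomputable def rescaledInv (δ : ℝ → G → G) (ε : ℝ) (x : G) : G := δ ε⁻¹ (δ ε x)⁻¹

end Rescaled

namespace IsDilationFamily

variable {G : Type*} {δ : ℝ → G → G} {ε η : ℝ}

theorem apply_apply_inv (hδ : IsDilationFamily δ) (hε : 0 < ε) (x : G) :
    δ ε (δ ε⁻¹ x) = x := by
  rw [hδ.comp ε ε⁻¹ hε (inv_pos.2 hε), mul_inv_cancel₀ hε.ne', hδ.one]

theorem apply_inv_apply (hδ : IsDilationFamily δ) (hε : 0 < ε) (x : G) :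
    δ ε⁻¹ (δ ε x) = x := by
  simpa using hδ.apply_apply_inv (inv_pos.2 hε) x

theorem apply_apply_mul_inv (hδ : IsDilationFamily δ) (hη : 0 < η) (hε : 0 < ε) (x : G) :
    δ η (δ (η * ε)⁻¹ x) = δ ε⁻¹ x := by
  rw [hδ.comp η _ hη (by positivity)]
  congr 1
  field_simp

variable [Group G]

theorem rescaledMul_assoc (hδ : IsDilationFamily δ) (hε : 0 < ε) (x y z : G) :
    rescaledMul δ ε x (rescaledMul δ ε y z) = rescaledMul δ ε (rescaledMul δ ε x y) z := by
  simp only [rescaledMul, hδ.apply_apply_inv hε, mul_assoc]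

theorem rescaledMul_rescaledOne (hδ : IsDilationFamily δ) (hε : 0 < ε) (x : G) :
    rescaledMul δ ε x (rescaledOne δ ε) = x := by
  simp only [rescaledMul, rescaledOne, hδ.apply_apply_inv hε, mul_one, hδ.apply_inv_apply hε]

theorem rescaledOne_rescaledMul (hδ : IsDilationFamily δ) (hε : 0 < ε) (x : G) :
    rescaledMul δ ε (rescaledOne δ ε) x = x := by
  simp only [rescaledMul, rescaledOne, hδ.apply_apply_inv hε, one_mul, hδ.apply_inv_apply hε]

theorem rescaledMul_rescaledInv (hδ : IsDilationFamily δ) (hε : 0 < ε) (x : G) :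
    rescaledMul δ ε x (rescaledInv δ ε x) = rescaledOne δ ε := by
  simp only [rescaledMul, rescaledInv, rescaledOne, hδ.apply_apply_inv hε, mul_inv_cancel]

theorem rescaledInv_rescaledMul (hδ : IsDilationFamily δ) (hε : 0 < ε) (x : G) :
    rescaledMul δ ε (rescaledInv δ ε x) x = rescaledOne δ ε := by
  simp only [rescaledMul, rescaledInv, rescaledOne, hδ.apply_apply_inv hε, inv_mul_cancel]

theorem apply_rescaledOne_mul (hδ : IsDilationFamily δ) (hη : 0 < η) (hε : 0 < ε) :
    δ η (rescaledOne δ (η * ε)) = rescaledOne δ ε :=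
  hδ.apply_apply_mul_inv hη hε 1

theorem apply_rescaledMul_mul (hδ : IsDilationFamily δ) (hη : 0 < η) (hε : 0 < ε) (x y : G) :
    δ η (rescaledMul δ (η * ε) x y) = rescaledMul δ ε (δ η x) (δ η y) := by
  rw [rescaledMul, rescaledMul, hδ.apply_apply_mul_inv hη hε, hδ.comp ε η hε hη,
    hδ.comp ε η hε hη, mul_comm ε η]

end IsDilationFamily

section Limit

variable {G : Type*} [Group G] [TopologicalSpace G]

def HasJointRescaledLimit (δ : ℝ → G → G) (β : G → G → G) : Prop :=
  ∀ ⦃a b : ℝ → G⦄ ⦃x y : G⦄, Tendsto a (𝓝[>] 0) (𝓝 x) → Tendsto b (𝓝[>] 0) (𝓝 y) →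
    Tendsto (fun ε => rescaledMul δ ε (a ε) (b ε)) (𝓝[>] 0) (𝓝 (β x y))

theorem continuous_rescaledMul [ContinuousMul G] {δ : ℝ → G → G}
    (hcont : ∀ ε, 0 < ε → Continuous (δ ε)) {ε : ℝ} (hε : 0 < ε) :
    Continuous fun p : G × G => rescaledMul δ ε p.1 p.2 :=
  (hcont ε⁻¹ (inv_pos.2 hε)).comp <|
    ((hcont ε hε).comp continuous_fst).mul ((hcont ε hε).comp continuous_snd)

end Limit

theorem hasJointRescaledLimit_of_tendstoLocallyUniformly {G : Type*} [Group G] [UniformSpace G]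
    [ContinuousMul G] {δ : ℝ → G → G} {β : G → G → G}
    (hcont : ∀ ε, 0 < ε → Continuous (δ ε))
    (hβ : TendstoLocallyUniformly (fun ε (p : G × G) => rescaledMul δ ε p.1 p.2)
      (fun p => β p.1 p.2) (𝓝[>] 0)) :
    HasJointRescaledLimit δ β := fun _ _ _ _ ha hb =>
  have hcontε : ∀ᶠ ε in 𝓝[>] (0 : ℝ), Continuous fun p : G × G => rescaledMul δ ε p.1 p.2 :=
    eventually_mem_nhdsWithin.mono fun _ hε => continuous_rescaledMul hcont hε
  hβ.tendsto_comp (hβ.continuous hcontε.frequently).continuousAt (ha.prodMk_nhds hb)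

namespace HasJointRescaledLimit

variable {G : Type*} [Group G] [TopologicalSpace G] [T2Space G] {δ : ℝ → G → G}
  {β : G → G → G}

theorem assoc (hlim : HasJointRescaledLimit δ β) (hδ : IsDilationFamily δ) (x y z : G) :
    β x (β y z) = β (β x y) z := by
  have hyz := hlim (tendsto_const_nhds (x := y)) (tendsto_const_nhds (x := z))
  have hxy := hlim (tendsto_const_nhds (x := x)) (tendsto_const_nhds (x := y))
  refine tendsto_nhds_unique (hlim tendsto_const_nhds hyz) ((hlim hxy tendsto_const_nhds).congr' ?_)
  filter_upwards [self_mem_nhdsWithin] with ε hε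
  exact (hδ.rescaledMul_assoc hε x y z).symm

theorem tendsto_rescaledOne (hlim : HasJointRescaledLimit δ β) (hδ : IsDilationFamily δ)
    (hcont : ∀ ε, 0 < ε → Continuous (δ ε))
    (hinv : Tendsto (rescaledInv δ · 1) (𝓝[>] 0) (𝓝 1))
    (hshrink : ∀ x, Tendsto (δ · x) (𝓝[>] 0) (𝓝 1)) :
    Tendsto (rescaledOne δ) (𝓝[>] 0) (𝓝 1) := by
  have hc : Tendsto (rescaledOne δ) (𝓝[>] 0) (𝓝 (β 1 1)) := by
    refine (hlim tendsto_const_nhds hinv).congr' ?_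
    filter_upwards [self_mem_nhdsWithin] with ε hε
    exact hδ.rescaledMul_rescaledInv hε 1
  have hfix : ∀ η, 0 < η → δ η (β 1 1) = β 1 1 := fun η hη => by
    refine tendsto_nhds_unique (((hcont η hη).tendsto _).comp
      (hc.comp (tendsto_const_mul_nhdsGT_zero hη))) (hc.congr' ?_)
    filter_upwards [self_mem_nhdsWithin] with ε hε
    exact (hδ.apply_rescaledOne_mul hη hε).symm
  suffices β 1 1 = 1 from this ▸ hc
  refine tendsto_nhds_unique (tendsto_const_nhds.congr' ?_) (hshrink (β 1 1))
  filter_upwards [self_mem_nhdsWithin] with η hη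
  exact (hfix η hη).symm

theorem mul_one (hlim : HasJointRescaledLimit δ β) (hδ : IsDilationFamily δ)
    (hunit : Tendsto (rescaledOne δ) (𝓝[>] 0) (𝓝 1)) (x : G) : β x 1 = x := by
  refine tendsto_nhds_unique (hlim tendsto_const_nhds hunit) (tendsto_const_nhds.congr' ?_)
  filter_upwards [self_mem_nhdsWithin] with ε hε
  exact (hδ.rescaledMul_rescaledOne hε x).symm

theorem one_mul (hlim : HasJointRescaledLimit δ β) (hδ : IsDilationFamily δ)
    (hunit : Tendsto (rescaledOne δ) (𝓝[>] 0) (𝓝 1)) (x : G) : β 1 x = x := by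
  refine tendsto_nhds_unique (hlim hunit tendsto_const_nhds) (tendsto_const_nhds.congr' ?_)
  filter_upwards [self_mem_nhdsWithin] with ε hε
  exact (hδ.rescaledOne_rescaledMul hε x).symm

theorem mul_inv (hlim : HasJointRescaledLimit δ β) (hδ : IsDilationFamily δ)
    (hunit : Tendsto (rescaledOne δ) (𝓝[>] 0) (𝓝 1)) {x : G}
    (hinv : Tendsto (rescaledInv δ · x) (𝓝[>] 0) (𝓝 x⁻¹)) : β x x⁻¹ = 1 := by
  refine tendsto_nhds_unique (hlim tendsto_const_nhds hinv) (hunit.congr' ?_)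
  filter_upwards [self_mem_nhdsWithin] with ε hε
  exact (hδ.rescaledMul_rescaledInv hε x).symm

theorem inv_mul (hlim : HasJointRescaledLimit δ β) (hδ : IsDilationFamily δ)
    (hunit : Tendsto (rescaledOne δ) (𝓝[>] 0) (𝓝 1)) {x : G}
    (hinv : Tendsto (rescaledInv δ · x) (𝓝[>] 0) (𝓝 x⁻¹)) : β x⁻¹ x = 1 := by
  refine tendsto_nhds_unique (hlim hinv tendsto_const_nhds) (hunit.congr' ?_)
  filter_upwards [self_mem_nhdsWithin] with ε hε
  exact (hδ.rescaledInv_rescaledMul hε x).symm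

theorem apply_dilation (hlim : HasJointRescaledLimit δ β) (hδ : IsDilationFamily δ) {η : ℝ}
    (hη : 0 < η) (hcont : Continuous (δ η)) (x y : G) : β (δ η x) (δ η y) = δ η (β x y) := by
  have hxy := hlim (tendsto_const_nhds (x := x)) (tendsto_const_nhds (x := y))
  refine tendsto_nhds_unique (hlim tendsto_const_nhds tendsto_const_nhds) ?_
  refine ((hcont.tendsto _).comp (hxy.comp (tendsto_const_mul_nhdsGT_zero hη))).congr' ?_
  filter_upwards [self_mem_nhdsWithin] with ε hε
  exact hδ.apply_rescaledMul_mul hη hε x y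

end HasJointRescaledLimit

/-- For a locally compact topological group `G` with maps
`δ_ε : G → G` (`ε > 0`) satisfying `δ_ε ∘ δ_μ = δ_{εμ}`, `δ_1 = id`, and the
axioms H0, H1, H2 (with limits uniform on compact sets), the limit operation
`β` makes `(G, β, δ)` a conical group: `β` is associative, has neutral element
`e = 1`, `x⁻¹` is the `β`-inverse of `x`, and `β (δ_η x) (δ_η y) = δ_η (β x y)`
for every `η > 0`. -/
theorem conical_group_of_H0_H1_H2
    {G : Type*} [Group G] [UniformSpace G] [IsUniformGroup G]
    [LocallyCompactSpace G] [T2Space G]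
    (δ : ℝ → G → G)
    (hδcont : ∀ ε : ℝ, 0 < ε → Continuous (δ ε))
    (hcomp : ∀ ε μ : ℝ, 0 < ε → 0 < μ → ∀ x : G, δ ε (δ μ x) = δ (ε * μ) x)
    (hone : ∀ x : G, δ 1 x = x)
    (hH0 : ∀ K : Set G, IsCompact K →
      TendstoUniformlyOn (fun (ε : ℝ) (x : G) => δ ε x) (fun _ => (1 : G))
        (𝓝[>] (0 : ℝ)) K)
    (β : G → G → G)
    (hH1 : ∀ K : Set (G × G), IsCompact K →
      TendstoUniformlyOn (fun (ε : ℝ) (p : G × G) => δ ε⁻¹ (δ ε p.1 * δ ε p.2))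
        (fun p => β p.1 p.2) (𝓝[>] (0 : ℝ)) K)
    (hH2 : ∀ K : Set G, IsCompact K →
      TendstoUniformlyOn (fun (ε : ℝ) (x : G) => δ ε⁻¹ ((δ ε x)⁻¹)) (fun x => x⁻¹)
        (𝓝[>] (0 : ℝ)) K) :
    ∀ x y z : G, ∀ η : ℝ, 0 < η →
      β x (β y z) = β (β x y) z ∧
      β x 1 = x ∧ β 1 x = x ∧
      β x x⁻¹ = 1 ∧ β x⁻¹ x = 1 ∧
      β (δ η x) (δ η y) = δ η (β x y) := by
  have hδ : IsDilationFamily δ := ⟨hcomp, hone⟩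
  have hlim : HasJointRescaledLimit δ β := hasJointRescaledLimit_of_tendstoLocallyUniformly hδcont
    (tendstoLocallyUniformly_iff_forall_isCompact.2 hH1)
  have hinv (x : G) : Tendsto (rescaledInv δ · x) (𝓝[>] 0) (𝓝 x⁻¹) :=
    (hH2 {x} isCompact_singleton).tendsto_at rfl
  have hunit : Tendsto (rescaledOne δ) (𝓝[>] 0) (𝓝 1) :=
    hlim.tendsto_rescaledOne hδ hδcont (by simpa using hinv 1)
      fun x => (hH0 {x} isCompact_singleton).tendsto_at rfl
  intro x y z η hη
  exact ⟨hlim.assoc hδ x y z, hlim.mul_one hδ hunit x, hlim.one_mul hδ hunit x,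
    hlim.mul_inv hδ hunit (hinv x), hlim.inv_mul hδ hunit (hinv x),
    hlim.apply_dilation hδ hη (hδcont η hη) x y⟩
end

section
/- Assume moreover that δ_ε^x x = x for all ε > 0 and x ∈ X. Then for all x, u, v ∈ X and ε > 0: (i) Δ_ε^x(u, v) = Σ_ε^{δ_ε^x u}(inv_ε^x(u), v); (ii) inv_ε^x(u) = Δ_ε^x(u, x); (iii) the inverse function is shifted involutive: inv_ε^{δ_ε^x u}(inv_ε^x(u)) = u. -/
/-- Assume moreover `δ_ε^x x = x` for all `ε > 0`, `x`. Then for all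
`x, u, v ∈ X` and `ε > 0`:
(i) `Δ_ε^x(u, v) = Σ_ε^{δ_ε^x u}(inv_ε^x(u), v)`;
(ii) `inv_ε^x(u) = Δ_ε^x(u, x)`;
(iii) shifted involutivity: `inv_ε^{δ_ε^x u}(inv_ε^x(u)) = u`. -/
theorem inverse_function_properties
    {X : Type*} (δ : ℝ → X → X → X)
    (hcomp : ∀ ε μ : ℝ, 0 < ε → 0 < μ → ∀ x y : X, δ ε x (δ μ x y) = δ (ε * μ) x y)
    (hone : ∀ x y : X, δ 1 x y = y)
    (hfix : ∀ ε : ℝ, 0 < ε → ∀ x : X, δ ε x x = x)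
    (Δ Sig : ℝ → X → X → X → X) (inv : ℝ → X → X → X)
    (hΔ : ∀ (ε : ℝ) (x u v : X), Δ ε x u v = δ ε⁻¹ (δ ε x u) (δ ε x v))
    (hSig : ∀ (ε : ℝ) (x u v : X), Sig ε x u v = δ ε⁻¹ x (δ ε (δ ε x u) v))
    (hinv : ∀ (ε : ℝ) (x u : X), inv ε x u = δ ε⁻¹ (δ ε x u) x) :
    ∀ ε : ℝ, 0 < ε → ∀ x u v : X,
      Δ ε x u v = Sig ε (δ ε x u) (inv ε x u) v ∧
      inv ε x u = Δ ε x u x ∧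
      inv ε (δ ε x u) (inv ε x u) = u := by
  intro ε hε x u v
  have hε' : (0:ℝ) < ε⁻¹ := inv_pos.mpr hε
  have key : δ ε (δ ε x u) (inv ε x u) = x := by
    rw [hinv, hcomp ε ε⁻¹ hε hε', mul_inv_cancel₀ hε.ne', hone]
  refine ⟨?_, ?_, ?_⟩
  · rw [hΔ, hSig, key]
  · rw [hΔ, hinv, hfix ε hε]
  · rw [hinv, key, hcomp ε⁻¹ ε hε' hε, inv_mul_cancel₀ hε.ne', hone]
end

section
/- The distance d^x has the cone property with respect to dilatations: for every x, u, v ∈ X and every μ ∈ (0, 1], d^x(u, v) = (1/μ) · d^x(δ_μ^x u, δ_μ^x v). -/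
open Filter Topology

/-- The distance `d^x` has the cone property with respect to dilatations:
for every `x, u, v ∈ X` and every `μ ∈ (0, 1]`,
`d^x(u, v) = (1/μ) · d^x(δ_μ^x u, δ_μ^x v)`. -/
theorem cone_property
    {X : Type*} [MetricSpace X] (δ : ℝ → X → X → X)
    (hcomp : ∀ ε μ : ℝ, 0 < ε → 0 < μ → ∀ x y : X, δ ε x (δ μ x y) = δ (ε * μ) x y)
    (hone : ∀ x y : X, δ 1 x y = y)
    (hfix : ∀ ε : ℝ, 0 < ε → ∀ x : X, δ ε x x = x)
    (dx : X → X → X → ℝ)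
    (hA3 : ∀ x u v : X,
      Tendsto (fun ε : ℝ => (1 / ε) * dist (δ ε x u) (δ ε x v))
        (𝓝[>] (0 : ℝ)) (𝓝 (dx x u v))) :
    ∀ x u v : X, ∀ μ : ℝ, 0 < μ → μ ≤ 1 →
      dx x u v = (1 / μ) * dx x (δ μ x u) (δ μ x v) := by
  intro x u v μ hμ _
  -- The map ε ↦ ε * μ tends to 0 within (0, ∞)
  have hmap : Tendsto (fun ε : ℝ => ε * μ) (𝓝[>] (0 : ℝ)) (𝓝[>] (0 : ℝ)) := by
    apply tendsto_nhdsWithin_of_tendsto_nhds_of_eventually_within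
    · have : Tendsto (fun ε : ℝ => ε * μ) (𝓝 (0 : ℝ)) (𝓝 (0 * μ)) :=
        (tendsto_id.mul_const μ)
      simpa using this.mono_left nhdsWithin_le_nhds
    · filter_upwards [self_mem_nhdsWithin] with ε (hε : 0 < ε)
      exact mul_pos hε hμ
  have h1 : Tendsto (fun ε : ℝ => (1 / (ε * μ)) * dist (δ (ε * μ) x u) (δ (ε * μ) x v))
      (𝓝[>] (0 : ℝ)) (𝓝 (dx x u v)) := (hA3 x u v).comp hmap
  have h2 : Tendsto (fun ε : ℝ => μ * ((1 / (ε * μ)) * dist (δ (ε * μ) x u) (δ (ε * μ) x v)))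
      (𝓝[>] (0 : ℝ)) (𝓝 (μ * dx x u v)) := h1.const_mul μ
  have h3 : Tendsto (fun ε : ℝ => (1 / ε) * dist (δ ε x (δ μ x u)) (δ ε x (δ μ x v)))
      (𝓝[>] (0 : ℝ)) (𝓝 (μ * dx x u v)) := by
    refine h2.congr' ?_
    filter_upwards [self_mem_nhdsWithin] with ε (hε : 0 < ε)
    rw [hcomp ε μ hε hμ, hcomp ε μ hε hμ]
    field_simp
  have huniq : dx x (δ μ x u) (δ μ x v) = μ * dx x u v :=
    tendsto_nhds_unique (hA3 x (δ μ x u) (δ μ x v)) h3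
  rw [huniq]
  field_simp
end

section
/- Fix x ∈ X and suppose there is A > 1 such that for every ε ∈ (0, 1] the closed ball B̄_d(x, ε) is contained in δ_ε^x(B̄_d(x, A)), and suppose the convergence (1/ε) d(δ_ε^x u, δ_ε^x v) → d^x(u, v) is uniform with respect to u, v ∈ B̄_d(x, A). Then lim_{ε→0+} (1/ε) · sup { |d(u, v) − d^x(u, v)| : d(x, u) ≤ ε, d(x, v) ≤ ε } = 0. -/
open Filter Topology Metric

/-- Fix `x ∈ X` and suppose there is `A > 1` such that for every
`ε ∈ (0,1]` the closed ball `B̄(x, ε)` is contained in `δ_ε^x(B̄(x, A))`, and the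
convergence `(1/ε) d(δ_ε^x u, δ_ε^x v) → d^x(u, v)` is uniform for `u, v ∈ B̄(x, A)`.
Then `lim_{ε→0+} (1/ε) · sup { |d(u,v) − d^x(u,v)| : d(x,u) ≤ ε, d(x,v) ≤ ε } = 0`,
i.e. for every `η > 0` there is `ε₀ > 0` such that for all `ε ∈ (0, ε₀)` and all
`u, v` with `d(x,u) ≤ ε`, `d(x,v) ≤ ε`, one has `|d(u,v) − d^x(u,v)| < η · ε`. -/
theorem metric_tangent_space_estimate
    {X : Type*} [MetricSpace X] (δ : ℝ → X → X → X)
    (hcomp : ∀ ε μ : ℝ, 0 < ε → 0 < μ → ∀ x y : X, δ ε x (δ μ x y) = δ (ε * μ) x y)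
    (hone : ∀ x y : X, δ 1 x y = y)
    (hfix : ∀ ε : ℝ, 0 < ε → ∀ x : X, δ ε x x = x)
    (x : X) (A : ℝ) (hA : 1 < A)
    (dx : X → X → ℝ)
    (hA3 : ∀ u v : X,
      Tendsto (fun ε : ℝ => (1 / ε) * dist (δ ε x u) (δ ε x v))
        (𝓝[>] (0 : ℝ)) (𝓝 (dx u v)))
    (hball : ∀ ε : ℝ, 0 < ε → ε ≤ 1 →
      closedBall x ε ⊆ δ ε x '' closedBall x A)
    (hunif : ∀ η : ℝ, 0 < η → ∃ ε₀ > (0 : ℝ), ∀ ε : ℝ, 0 < ε → ε < ε₀ →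
      ∀ u ∈ closedBall x A, ∀ v ∈ closedBall x A,
        |(1 / ε) * dist (δ ε x u) (δ ε x v) - dx u v| < η) :
    ∀ η : ℝ, 0 < η → ∃ ε₀ > (0 : ℝ), ∀ ε : ℝ, 0 < ε → ε < ε₀ →
      ∀ u v : X, dist x u ≤ ε → dist x v ≤ ε →
        |dist u v - dx u v| < η * ε := by
  intro η hη
  obtain ⟨ε₁, hε₁, hunif'⟩ := hunif η hη
  refine ⟨min ε₁ 1, lt_min hε₁ one_pos, ?_⟩
  intro ε hε hεlt u v hu hv
  have hε1 : ε ≤ 1 := le_of_lt (lt_of_lt_of_le hεlt (min_le_right _ _))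
  have hεε₁ : ε < ε₁ := lt_of_lt_of_le hεlt (min_le_left _ _)
  have hu' : u ∈ closedBall x ε := by simpa [Metric.mem_closedBall, dist_comm] using hu
  have hv' : v ∈ closedBall x ε := by simpa [Metric.mem_closedBall, dist_comm] using hv
  obtain ⟨u', hu'A, rfl⟩ := hball ε hε hε1 hu'
  obtain ⟨v', hv'A, rfl⟩ := hball ε hε hε1 hv'
  -- dx scales: dx (δ ε x u') (δ ε x v') = ε * dx u' v'
  have hmul : Tendsto (fun μ : ℝ => μ * ε) (𝓝[>] (0:ℝ)) (𝓝[>] (0:ℝ)) := by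
    apply tendsto_nhdsWithin_of_tendsto_nhds_of_eventually_within
    · have : Tendsto (fun μ : ℝ => μ * ε) (𝓝 (0:ℝ)) (𝓝 ((0:ℝ) * ε)) :=
        (continuous_mul_right ε).tendsto 0
      simpa using this.mono_left nhdsWithin_le_nhds
    · filter_upwards [self_mem_nhdsWithin] with μ hμ
      exact mul_pos hμ hε
  have h2 : Tendsto (fun μ : ℝ => (1 / μ) * dist (δ μ x (δ ε x u')) (δ μ x (δ ε x v')))
      (𝓝[>] (0:ℝ)) (𝓝 (ε * dx u' v')) := by
    have hc := ((hA3 u' v').comp hmul).const_mul ε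
    refine hc.congr' ?_
    filter_upwards [self_mem_nhdsWithin] with μ hμ
    have e1 : δ μ x (δ ε x u') = δ (μ * ε) x u' := hcomp μ ε hμ hε x u'
    have e2 : δ μ x (δ ε x v') = δ (μ * ε) x v' := hcomp μ ε hμ hε x v'
    simp only [Function.comp, e1, e2]
    have hμε : ε * (1 / (μ * ε)) = 1 / μ := by
      have hμ0 : (μ:ℝ) ≠ 0 := ne_of_gt hμ
      field_simp
    rw [← mul_assoc, hμε]
  have hscale : dx (δ ε x u') (δ ε x v') = ε * dx u' v' :=
    tendsto_nhds_unique (hA3 (δ ε x u') (δ ε x v')) h2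
  have key := hunif' ε hε hεε₁ u' hu'A v' hv'A
  rw [hscale]
  have hne : ε ≠ 0 := ne_of_gt hε
  have hdist : ε * ((1 / ε) * dist (δ ε x u') (δ ε x v') - dx u' v')
      = dist (δ ε x u') (δ ε x v') - ε * dx u' v' := by
    field_simp
  have heq : |dist (δ ε x u') (δ ε x v') - ε * dx u' v'|
      = ε * |(1 / ε) * dist (δ ε x u') (δ ε x v') - dx u' v'| := by
    rw [← hdist, abs_mul, abs_of_pos hε]
  rw [heq, mul_comm η ε]
  exact mul_lt_mul_of_pos_left key hε
end

section
/- Assume Axioms A3 and A4 hold with uniform convergence on compact sets. Then for each x ∈ X and each u ∈ X, the infinitesimal translation L_u^x := Δ^x(u, ·) is a d^x-isometry: for all v, w ∈ X, d^x(Δ^x(u, v), Δ^x(u, w)) = d^x(v, w). -/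
open Filter Topology

/-!
Since `δ_ε^{y} ∘ δ_{1/ε}^{y} = id`, the point `δ_ε^{δ_ε^x u}` maps `Δ_ε^x(u, v)` back to
`δ_ε^x v`. Hence the rescaled distance based at `δ_ε^x u` between `Δ_ε^x(u, v)` and
`Δ_ε^x(u, w)` is exactly the rescaled distance based at `x` between `v` and `w`. As `ε → 0`
the right side tends to `d^x(v, w)`. On a locally compact space, A3 is locally uniform
convergence of continuous functions, so `d^x` is jointly continuous in the base point and
both arguments, and the left side tends to `d^x(Δ^x(u, v), Δ^x(u, w))` along the convergent
curve `(δ_ε^x u, Δ_ε^x(u, v), Δ_ε^x(u, w))`.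
-/

section Dilation

variable {X : Type*} {δ : ℝ → X → X → X}

lemma dilation_dilation_inv
    (hcomp : ∀ ε μ : ℝ, 0 < ε → 0 < μ → ∀ x y : X, δ ε x (δ μ x y) = δ (ε * μ) x y)
    (hone : ∀ x y : X, δ 1 x y = y) {ε : ℝ} (hε : 0 < ε) (x y : X) :
    δ ε x (δ ε⁻¹ x y) = y := by
  rw [hcomp ε ε⁻¹ hε (inv_pos.mpr hε), mul_inv_cancel₀ hε.ne', hone]

lemma continuous_dilation_of_pos [TopologicalSpace X]
    (hcont : ContinuousOn (fun p : ℝ × X × X => δ p.1 p.2.1 p.2.2) {p | 0 < p.1})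
    {ε : ℝ} (hε : 0 < ε) : Continuous (fun q : X × X => δ ε q.1 q.2) :=
  continuous_iff_continuousAt.2 fun _ =>
    (hcont.continuousAt ((isOpen_lt continuous_const continuous_fst).mem_nhds hε)).comp
      (continuousAt_const.prodMk continuousAt_id)

variable [MetricSpace X]

lemma continuous_scaledDist_of_pos
    (hcont : ContinuousOn (fun p : ℝ × X × X => δ p.1 p.2.1 p.2.2) {p | 0 < p.1})
    {ε : ℝ} (hε : 0 < ε) :
    Continuous (fun p : X × X × X => (1 / ε) * dist (δ ε p.1 p.2.1) (δ ε p.1 p.2.2)) := by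
  have hδ := continuous_dilation_of_pos hcont hε
  fun_prop

lemma tendstoLocallyUniformly_scaledDist [LocallyCompactSpace X] {dx : X → X → X → ℝ}
    (hA3 : ∀ K : Set (X × X × X), IsCompact K →
      TendstoUniformlyOn
        (fun (ε : ℝ) (p : X × X × X) => (1 / ε) * dist (δ ε p.1 p.2.1) (δ ε p.1 p.2.2))
        (fun p => dx p.1 p.2.1 p.2.2) (𝓝[>] (0 : ℝ)) K) :
    TendstoLocallyUniformly
      (fun (ε : ℝ) (p : X × X × X) => (1 / ε) * dist (δ ε p.1 p.2.1) (δ ε p.1 p.2.2))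
      (fun p => dx p.1 p.2.1 p.2.2) (𝓝[>] (0 : ℝ)) :=
  tendstoLocallyUniformly_iff_forall_isCompact.2 hA3

lemma continuous_limit_scaledDist [LocallyCompactSpace X]
    (hcont : ContinuousOn (fun p : ℝ × X × X => δ p.1 p.2.1 p.2.2) {p | 0 < p.1})
    {dx : X → X → X → ℝ}
    (hA3 : ∀ K : Set (X × X × X), IsCompact K →
      TendstoUniformlyOn
        (fun (ε : ℝ) (p : X × X × X) => (1 / ε) * dist (δ ε p.1 p.2.1) (δ ε p.1 p.2.2))
        (fun p => dx p.1 p.2.1 p.2.2) (𝓝[>] (0 : ℝ)) K) :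
    Continuous (fun p : X × X × X => dx p.1 p.2.1 p.2.2) :=
  (tendstoLocallyUniformly_scaledDist hA3).continuous <|
    (eventually_nhdsWithin_of_forall (s := Set.Ioi 0) (a := 0) fun _ hε =>
      continuous_scaledDist_of_pos hcont hε).frequently

end Dilation

theorem infinitesimal_translations_are_isometries_general
    {X : Type*} [MetricSpace X] [LocallyCompactSpace X]
    (δ : ℝ → X → X → X)
    (hcomp : ∀ ε μ : ℝ, 0 < ε → 0 < μ → ∀ x y : X, δ ε x (δ μ x y) = δ (ε * μ) x y)
    (hone : ∀ x y : X, δ 1 x y = y)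
    (hcont : ContinuousOn (fun p : ℝ × X × X => δ p.1 p.2.1 p.2.2) {p | 0 < p.1})
    (hlim0 : ∀ x y : X, Tendsto (fun ε : ℝ => δ ε x y) (𝓝[>] (0 : ℝ)) (𝓝 x))
    (dx : X → X → X → ℝ)
    (hA3 : ∀ K : Set (X × X × X), IsCompact K →
      TendstoUniformlyOn
        (fun (ε : ℝ) (p : X × X × X) => (1 / ε) * dist (δ ε p.1 p.2.1) (δ ε p.1 p.2.2))
        (fun p => dx p.1 p.2.1 p.2.2) (𝓝[>] (0 : ℝ)) K)
    (ΔL : X → X → X → X)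
    (hA4 : ∀ K : Set (X × X × X), IsCompact K →
      TendstoUniformlyOn
        (fun (ε : ℝ) (p : X × X × X) => δ ε⁻¹ (δ ε p.1 p.2.1) (δ ε p.1 p.2.2))
        (fun p => ΔL p.1 p.2.1 p.2.2) (𝓝[>] (0 : ℝ)) K) :
    ∀ x u v w : X, dx x (ΔL x u v) (ΔL x u w) = dx x v w := by
  intro x u v w
  have hΔ : ∀ y, Tendsto (fun ε : ℝ => δ ε⁻¹ (δ ε x u) (δ ε x y)) (𝓝[>] 0) (𝓝 (ΔL x u y)) :=
    fun y => (hA4 {(x, u, y)} isCompact_singleton).tendsto_at rfl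
  have hcurve := (hlim0 x u).prodMk_nhds ((hΔ v).prodMk_nhds (hΔ w))
  have hlimit := (tendstoLocallyUniformly_scaledDist hA3).tendsto_comp
    (continuous_limit_scaledDist hcont hA3).continuousAt hcurve
  refine tendsto_nhds_unique (hlimit.congr' ?_)
    ((hA3 {(x, v, w)} isCompact_singleton).tendsto_at rfl)
  filter_upwards [self_mem_nhdsWithin] with ε hε
  simp only [dilation_dilation_inv hcomp hone hε]

/-- For a dilatation structure on a locally compact complete metric
space `X` (axioms A3 and A4 holding with uniform convergence on compact sets),
the infinitesimal translations `L_u^x = Δ^x(u, ·)` are `d^x`-isometries: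
`d^x(Δ^x(u,v), Δ^x(u,w)) = d^x(v,w)` for all `v, w`. -/
theorem infinitesimal_translations_are_isometries
    {X : Type*} [MetricSpace X] [CompleteSpace X] [LocallyCompactSpace X]
    (δ : ℝ → X → X → X)
    (hcomp : ∀ ε μ : ℝ, 0 < ε → 0 < μ → ∀ x y : X, δ ε x (δ μ x y) = δ (ε * μ) x y)
    (hone : ∀ x y : X, δ 1 x y = y)
    (hfix : ∀ ε : ℝ, 0 < ε → ∀ x : X, δ ε x x = x)
    (hcont : ContinuousOn (fun p : ℝ × X × X => δ p.1 p.2.1 p.2.2) {p | 0 < p.1})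
    (hlim0 : ∀ x y : X, Tendsto (fun ε : ℝ => δ ε x y) (𝓝[>] (0 : ℝ)) (𝓝 x))
    (dx : X → X → X → ℝ)
    (hA3 : ∀ K : Set (X × X × X), IsCompact K →
      TendstoUniformlyOn
        (fun (ε : ℝ) (p : X × X × X) => (1 / ε) * dist (δ ε p.1 p.2.1) (δ ε p.1 p.2.2))
        (fun p => dx p.1 p.2.1 p.2.2) (𝓝[>] (0 : ℝ)) K)
    (ΔL : X → X → X → X)
    (hA4 : ∀ K : Set (X × X × X), IsCompact K →
      TendstoUniformlyOn
        (fun (ε : ℝ) (p : X × X × X) => δ ε⁻¹ (δ ε p.1 p.2.1) (δ ε p.1 p.2.2))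
        (fun p => ΔL p.1 p.2.1 p.2.2) (𝓝[>] (0 : ℝ)) K) :
    ∀ x u v w : X, dx x (ΔL x u v) (ΔL x u w) = dx x v w :=
  infinitesimal_translations_are_isometries_general δ hcomp hone hcont hlim0 dx hA3 ΔL hA4
end

section
/- Assume Axioms A3 and A4 hold with uniform convergence on compact sets, that d^x is nondegenerate for every x, and let Σ^x(u, v) = lim_{ε→0+} Σ_ε^x(u, v) (uniform on compact sets). Then the dilatations δ^x are compatible with the group operation Σ^x: for every μ ∈ (0, 1] and all u, v ∈ X, δ_μ^x(Σ^x(u, v)) = Σ^x(δ_μ^x u, δ_μ^x v); thus (X, Σ^x, δ^x) is a conical group whose left translations Σ^x(u, ·) are d^x-isometries. -/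
open Filter Topology

/-!
The composition law `δ_ε^x ∘ δ_{1/ε}^x = id` collapses `δ_ε^x Σ_ε^x(u, v)` to `δ_ε^{δ_ε^x u} v`.
Hence the rescaled distance `(1/ε) d(δ_ε^x ·, δ_ε^x ·)` of two approximate sums based at `x` equals
a rescaled distance based at the moving point `δ_ε^x u → x`. Because A3 holds uniformly on compact
sets, its limit `d^x` is continuous and can be evaluated along converging arguments, so both sides
have the same limit. In the dilatation claim, working at scale `ε = tμ`, the other side tends to
`d^x(δ_μ^x v, δ_μ^x v) = 0`, and nondegeneracy concludes.
-/

theorem TendstoLocallyUniformly.eq_of_eventually_eq_comp {ι α β : Type*} [TopologicalSpace α]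
    [UniformSpace β] [T2Space β] {F : ι → α → β} {f : α → β} {l : Filter ι} [l.NeBot]
    (hF : TendstoLocallyUniformly F f l) {g h : ι → α} {a b : α}
    (hfa : ContinuousAt f a) (hfb : ContinuousAt f b)
    (hg : Tendsto g l (𝓝 a)) (hh : Tendsto h l (𝓝 b))
    (heq : ∀ᶠ n in l, F n (g n) = F n (h n)) : f a = f b :=
  tendsto_nhds_unique ((hF.tendsto_comp hfa hg).congr' heq) (hF.tendsto_comp hfb hh)

theorem tendsto_mul_const_nhdsGT_zero {μ : ℝ} (hμ : 0 < μ) :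
    Tendsto (fun t : ℝ => t * μ) (𝓝[>] 0) (𝓝[>] 0) := by
  refine tendsto_nhdsWithin_of_tendsto_nhds_of_eventually_within _ ?_ ?_
  · simpa using (tendsto_id.mul_const μ).mono_left (nhdsWithin_le_nhds (a := (0 : ℝ)))
  · filter_upwards [self_mem_nhdsWithin] with t ht using mul_pos ht hμ

namespace Dilation

variable {X : Type*} {δ : ℝ → X → X → X}

/-- `Σ_ε^x(u, v)` at `p = (x, u, v)`. -/
noncomputable def approxSum (δ : ℝ → X → X → X) (ε : ℝ) (p : X × X × X) : X :=
  δ ε⁻¹ p.1 (δ ε (δ ε p.1 p.2.1) p.2.2)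

theorem dilation_approxSum
    (hcomp : ∀ ε μ : ℝ, 0 < ε → 0 < μ → ∀ x y : X, δ ε x (δ μ x y) = δ (ε * μ) x y)
    (hone : ∀ x y : X, δ 1 x y = y) {ε : ℝ} (hε : 0 < ε) (x u v : X) :
    δ ε x (approxSum δ ε (x, u, v)) = δ ε (δ ε x u) v := by
  rw [approxSum, hcomp ε ε⁻¹ hε (inv_pos.2 hε), mul_inv_cancel₀ hε.ne', hone]

variable [MetricSpace X]

noncomputable def rescaledDist (δ : ℝ → X → X → X) (ε : ℝ) (p : X × X × X) : ℝ :=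
  (1 / ε) * dist (δ ε p.1 p.2.1) (δ ε p.1 p.2.2)

theorem continuous_of_continuousOn_pos
    (hcont : ContinuousOn (fun p : ℝ × X × X => δ p.1 p.2.1 p.2.2) {p | 0 < p.1})
    {ε : ℝ} (hε : 0 < ε) : Continuous (fun p : X × X => δ ε p.1 p.2) := by
  have hopen : IsOpen {p : ℝ × X × X | 0 < p.1} := isOpen_lt continuous_const continuous_fst
  exact continuous_iff_continuousAt.2 fun p =>
    (hcont.continuousAt (hopen.mem_nhds hε)).comp (Continuous.prodMk_right ε).continuousAt

theorem continuous_rescaledDist {ε : ℝ} (hδ : Continuous (fun p : X × X => δ ε p.1 p.2)) :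
    Continuous (rescaledDist δ ε) := by
  unfold rescaledDist
  fun_prop

theorem rescaledDist_self (ε : ℝ) (x w : X) : rescaledDist δ ε (x, w, w) = 0 := by
  simp [rescaledDist]

variable {dx : X → X → X → ℝ} {SigL : X → X → X → X}

theorem dx_self
    (hD : TendstoLocallyUniformly (rescaledDist δ) (fun p => dx p.1 p.2.1 p.2.2) (𝓝[>] 0))
    (x w : X) : dx x w w = 0 :=
  tendsto_nhds_unique (hD.tendstoLocallyUniformlyOn.tendsto_at (Set.mem_univ (x, w, w)))
    (by simp only [rescaledDist_self, tendsto_const_nhds])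

theorem dx_sum_left
    (hcomp : ∀ ε μ : ℝ, 0 < ε → 0 < μ → ∀ x y : X, δ ε x (δ μ x y) = δ (ε * μ) x y)
    (hone : ∀ x y : X, δ 1 x y = y)
    (hlim0 : ∀ x y : X, Tendsto (fun ε : ℝ => δ ε x y) (𝓝[>] (0 : ℝ)) (𝓝 x))
    (hD : TendstoLocallyUniformly (rescaledDist δ) (fun p => dx p.1 p.2.1 p.2.2) (𝓝[>] 0))
    (hdx : Continuous (fun p : X × X × X => dx p.1 p.2.1 p.2.2))
    (hSig : ∀ x u v, Tendsto (fun ε => approxSum δ ε (x, u, v)) (𝓝[>] 0) (𝓝 (SigL x u v)))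
    (x u v w : X) : dx x (SigL x u v) (SigL x u w) = dx x v w := by
  refine hD.eq_of_eventually_eq_comp hdx.continuousAt hdx.continuousAt
    (g := fun ε => (x, approxSum δ ε (x, u, v), approxSum δ ε (x, u, w)))
    (h := fun ε => (δ ε x u, v, w))
    (tendsto_const_nhds.prodMk_nhds ((hSig x u v).prodMk_nhds (hSig x u w)))
    ((hlim0 x u).prodMk_nhds tendsto_const_nhds) ?_
  filter_upwards [self_mem_nhdsWithin] with ε hε
  simp only [rescaledDist, dilation_approxSum hcomp hone hε]

theorem dilation_sum
    (hcomp : ∀ ε μ : ℝ, 0 < ε → 0 < μ → ∀ x y : X, δ ε x (δ μ x y) = δ (ε * μ) x y)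
    (hone : ∀ x y : X, δ 1 x y = y)
    (hlim0 : ∀ x y : X, Tendsto (fun ε : ℝ => δ ε x y) (𝓝[>] (0 : ℝ)) (𝓝 x))
    (hD : TendstoLocallyUniformly (rescaledDist δ) (fun p => dx p.1 p.2.1 p.2.2) (𝓝[>] 0))
    (hdx : Continuous (fun p : X × X × X => dx p.1 p.2.1 p.2.2))
    (hnd : ∀ x v w : X, dx x v w = 0 → v = w)
    (hSig : ∀ x u v, Tendsto (fun ε => approxSum δ ε (x, u, v)) (𝓝[>] 0) (𝓝 (SigL x u v)))
    {μ : ℝ} (hμ : 0 < μ) (hδμ : Continuous (fun p : X × X => δ μ p.1 p.2)) (x u v : X) :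
    δ μ x (SigL x u v) = SigL x (δ μ x u) (δ μ x v) := by
  have hscale := tendsto_mul_const_nhdsGT_zero hμ
  have hδμx : Continuous (δ μ x) := hδμ.comp (Continuous.prodMk_right x)
  have hy : Tendsto (fun t => δ (t * μ) x u) (𝓝[>] 0) (𝓝 x) := (hlim0 x u).comp hscale
  have hbase : Tendsto
      (fun t => (x, δ μ x (approxSum δ (t * μ) (x, u, v)), approxSum δ t (x, δ μ x u, δ μ x v)))
      (𝓝[>] 0) (𝓝 (x, δ μ x (SigL x u v), SigL x (δ μ x u) (δ μ x v))) :=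
    tendsto_const_nhds.prodMk_nhds
      (((hδμx.tendsto _).comp ((hSig x u v).comp hscale)).prodMk_nhds (hSig x _ _))
  have hmoving : Tendsto (fun t => (δ (t * μ) x u, δ μ (δ (t * μ) x u) v, δ μ x v))
      (𝓝[>] 0) (𝓝 (x, δ μ x v, δ μ x v)) :=
    hy.prodMk_nhds (((hδμ.tendsto _).comp (hy.prodMk_nhds tendsto_const_nhds)).prodMk_nhds
      tendsto_const_nhds)
  -- both sides collapse to `δ_{tμ}^{δ_{tμ}^x u}(·)` by the composition law
  have hcollapse : ∀ᶠ t in 𝓝[>] 0,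
      rescaledDist δ t (x, δ μ x (approxSum δ (t * μ) (x, u, v)),
          approxSum δ t (x, δ μ x u, δ μ x v)) =
        rescaledDist δ t (δ (t * μ) x u, δ μ (δ (t * μ) x u) v, δ μ x v) := by
    filter_upwards [self_mem_nhdsWithin] with t (ht : 0 < t)
    simp only [rescaledDist, hcomp t μ ht hμ,
      dilation_approxSum hcomp hone (mul_pos ht hμ), dilation_approxSum hcomp hone ht]
  refine hnd x _ _ ?_
  rw [← dx_self hD x (δ μ x v)]
  exact hD.eq_of_eventually_eq_comp hdx.continuousAt hdx.continuousAt hbase hmoving hcollapse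

end Dilation

theorem tangent_space_is_conical_group_general
    {X : Type*} [MetricSpace X] [LocallyCompactSpace X]
    (δ : ℝ → X → X → X)
    (hcomp : ∀ ε μ : ℝ, 0 < ε → 0 < μ → ∀ x y : X, δ ε x (δ μ x y) = δ (ε * μ) x y)
    (hone : ∀ x y : X, δ 1 x y = y)
    (hcont : ContinuousOn (fun p : ℝ × X × X => δ p.1 p.2.1 p.2.2) {p | 0 < p.1})
    (hlim0 : ∀ x y : X, Tendsto (fun ε : ℝ => δ ε x y) (𝓝[>] (0 : ℝ)) (𝓝 x))
    (dx : X → X → X → ℝ)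
    (hA3 : ∀ K : Set (X × X × X), IsCompact K →
      TendstoUniformlyOn
        (fun (ε : ℝ) (p : X × X × X) => (1 / ε) * dist (δ ε p.1 p.2.1) (δ ε p.1 p.2.2))
        (fun p => dx p.1 p.2.1 p.2.2) (𝓝[>] (0 : ℝ)) K)
    (hnd : ∀ x v w : X, dx x v w = 0 → v = w)
    (SigL : X → X → X → X)
    (hSig : ∀ K : Set (X × X × X), IsCompact K →
      TendstoUniformlyOn
        (fun (ε : ℝ) (p : X × X × X) => δ ε⁻¹ p.1 (δ ε (δ ε p.1 p.2.1) p.2.2))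
        (fun p => SigL p.1 p.2.1 p.2.2) (𝓝[>] (0 : ℝ)) K) :
    (∀ x : X, ∀ μ : ℝ, 0 < μ → μ ≤ 1 → ∀ u v : X,
        δ μ x (SigL x u v) = SigL x (δ μ x u) (δ μ x v)) ∧
    (∀ x u v w : X, dx x (SigL x u v) (SigL x u w) = dx x v w) := by
  have hδ : ∀ ε, 0 < ε → Continuous (fun p : X × X => δ ε p.1 p.2) :=
    fun _ hε => Dilation.continuous_of_continuousOn_pos hcont hε
  have hD : TendstoLocallyUniformly (Dilation.rescaledDist δ) (fun p => dx p.1 p.2.1 p.2.2)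
      (𝓝[>] 0) :=
    tendstoLocallyUniformly_iff_forall_isCompact.2 hA3
  have hdx : Continuous (fun p : X × X × X => dx p.1 p.2.1 p.2.2) :=
    hD.continuous (Eventually.frequently (f := 𝓝[>] (0 : ℝ)) <|
      eventually_mem_nhdsWithin.mono fun _ hε => Dilation.continuous_rescaledDist (hδ _ hε))
  have hSigPt : ∀ x u v,
      Tendsto (fun ε => Dilation.approxSum δ ε (x, u, v)) (𝓝[>] 0) (𝓝 (SigL x u v)) :=
    fun x u v => (hSig _ isCompact_singleton).tendsto_at rfl
  exact ⟨fun x μ hμ _ u v =>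
      Dilation.dilation_sum hcomp hone hlim0 hD hdx hnd hSigPt hμ (hδ μ hμ) x u v,
    Dilation.dx_sum_left hcomp hone hlim0 hD hdx hSigPt⟩

/-- Under axioms A3, A4 (uniform on compact sets) with each `d^x`
nondegenerate, and `Σ^x = lim Σ_ε^x` (uniform on compact sets), the dilatations
are compatible with the group operation: for every `μ ∈ (0,1]` and all `u, v`,
`δ_μ^x(Σ^x(u, v)) = Σ^x(δ_μ^x u, δ_μ^x v)`; thus `(X, Σ^x, δ^x)` is a conical
group whose left translations `Σ^x(u, ·)` are `d^x`-isometries. -/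
theorem tangent_space_is_conical_group
    {X : Type*} [MetricSpace X] [CompleteSpace X] [LocallyCompactSpace X]
    (δ : ℝ → X → X → X)
    (hcomp : ∀ ε μ : ℝ, 0 < ε → 0 < μ → ∀ x y : X, δ ε x (δ μ x y) = δ (ε * μ) x y)
    (hone : ∀ x y : X, δ 1 x y = y)
    (hfix : ∀ ε : ℝ, 0 < ε → ∀ x : X, δ ε x x = x)
    (hcont : ContinuousOn (fun p : ℝ × X × X => δ p.1 p.2.1 p.2.2) {p | 0 < p.1})
    (hlim0 : ∀ x y : X, Tendsto (fun ε : ℝ => δ ε x y) (𝓝[>] (0 : ℝ)) (𝓝 x))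
    (dx : X → X → X → ℝ)
    (hA3 : ∀ K : Set (X × X × X), IsCompact K →
      TendstoUniformlyOn
        (fun (ε : ℝ) (p : X × X × X) => (1 / ε) * dist (δ ε p.1 p.2.1) (δ ε p.1 p.2.2))
        (fun p => dx p.1 p.2.1 p.2.2) (𝓝[>] (0 : ℝ)) K)
    (ΔL : X → X → X → X)
    (hA4 : ∀ K : Set (X × X × X), IsCompact K →
      TendstoUniformlyOn
        (fun (ε : ℝ) (p : X × X × X) => δ ε⁻¹ (δ ε p.1 p.2.1) (δ ε p.1 p.2.2))
        (fun p => ΔL p.1 p.2.1 p.2.2) (𝓝[>] (0 : ℝ)) K)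
    (hnd : ∀ x v w : X, dx x v w = 0 → v = w)
    (SigL : X → X → X → X)
    (hSig : ∀ K : Set (X × X × X), IsCompact K →
      TendstoUniformlyOn
        (fun (ε : ℝ) (p : X × X × X) => δ ε⁻¹ p.1 (δ ε (δ ε p.1 p.2.1) p.2.2))
        (fun p => SigL p.1 p.2.1 p.2.2) (𝓝[>] (0 : ℝ)) K) :
    (∀ x : X, ∀ μ : ℝ, 0 < μ → μ ≤ 1 → ∀ u v : X,
        δ μ x (SigL x u v) = SigL x (δ μ x u) (δ μ x v)) ∧
    (∀ x u v w : X, dx x (SigL x u v) (SigL x u w) = dx x v w) :=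
  tangent_space_is_conical_group_general δ hcomp hone hcont hlim0 dx hA3 hnd SigL hSig
end

section
/- Let δ and δ̄ be two such families of bijections on X, suppose δ̄ satisfies Axiom A3 with limit distances d̄^x, uniformly on compact sets, and that the function (x, u, v) ↦ d̄^x(u, v) is continuous. Fix x ∈ X and suppose Q_ε^x(u) := (δ̄_ε^x)⁻¹(δ_ε^x(u)) converges, as ε → 0+, to Q^x(u), uniformly for u in compact sets. Then lim_{ε→0+} (1/ε) · d̄( δ_ε^x u, δ̄_ε^x(Q^x(u)) ) = 0 for every u. -/
open Filter Topology

/-- Let `δ` and `δ'` (written `δ̄` in the text) be two families of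
dilatations on the locally compact complete metric space `(X, d̄)`, suppose `δ̄`
satisfies axiom A3 with limit distances `d̄^x`, uniformly on compact sets, and that
`(x, u, v) ↦ d̄^x(u, v)` is continuous. Fix `x` and suppose
`Q_ε^x(u) = (δ̄_ε^x)⁻¹(δ_ε^x(u)) → Q^x(u)` as ε → 0+, uniformly for `u` in compact
sets. Then `lim_{ε→0+} (1/ε) · d̄(δ_ε^x u, δ̄_ε^x(Q^x(u))) = 0` for every `u`. -/
theorem equivalence_estimate_from_Q_limit
    {X : Type*} [MetricSpace X] [CompleteSpace X] [LocallyCompactSpace X]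
    (δ δ' : ℝ → X → X → X)
    (hcomp : ∀ ε μ : ℝ, 0 < ε → 0 < μ → ∀ x y : X, δ ε x (δ μ x y) = δ (ε * μ) x y)
    (hone : ∀ x y : X, δ 1 x y = y)
    (hfix : ∀ ε : ℝ, 0 < ε → ∀ x : X, δ ε x x = x)
    (hcomp' : ∀ ε μ : ℝ, 0 < ε → 0 < μ → ∀ x y : X, δ' ε x (δ' μ x y) = δ' (ε * μ) x y)
    (hone' : ∀ x y : X, δ' 1 x y = y)
    (hfix' : ∀ ε : ℝ, 0 < ε → ∀ x : X, δ' ε x x = x)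
    (dx' : X → X → X → ℝ)
    (hA3' : ∀ K : Set (X × X × X), IsCompact K →
      TendstoUniformlyOn
        (fun (ε : ℝ) (p : X × X × X) => (1 / ε) * dist (δ' ε p.1 p.2.1) (δ' ε p.1 p.2.2))
        (fun p => dx' p.1 p.2.1 p.2.2) (𝓝[>] (0 : ℝ)) K)
    (hdxcont : Continuous (fun p : X × X × X => dx' p.1 p.2.1 p.2.2))
    (x : X) (Qx : X → X)
    (hQ : ∀ K : Set X, IsCompact K →
      TendstoUniformlyOn (fun (ε : ℝ) (u : X) => δ' ε⁻¹ x (δ ε x u)) Qx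
        (𝓝[>] (0 : ℝ)) K) :
    ∀ u : X,
      Tendsto (fun ε : ℝ => (1 / ε) * dist (δ ε x u) (δ' ε x (Qx u)))
        (𝓝[>] (0 : ℝ)) (𝓝 0) := by
  intro u
  -- dx' x w w = 0
  have hzero : ∀ w : X, dx' x w w = 0 := by
    intro w
    have hK : IsCompact ({(x, w, w)} : Set (X × X × X)) := isCompact_singleton
    have h1 := (hA3' _ hK).tendsto_at (rfl : (x, w, w) ∈ ({(x, w, w)} : Set _))
    have h2 : Tendsto (fun ε : ℝ => (1 / ε) *
        dist (δ' ε x w) (δ' ε x w)) (𝓝[>] (0 : ℝ)) (𝓝 0) := by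
      simpa using tendsto_const_nhds (x := (0:ℝ)) (f := 𝓝[>] (0:ℝ))
    exact tendsto_nhds_unique h1 h2
  -- compact neighborhood of Qx u
  obtain ⟨K₀, hK₀cpt, hK₀mem⟩ := exists_compact_mem_nhds (Qx u)
  set S : Set (X × X × X) := {x} ×ˢ K₀ ×ˢ {Qx u} with hS
  have hScpt : IsCompact S := isCompact_singleton.prod (hK₀cpt.prod isCompact_singleton)
  -- pointwise convergence of Q_ε u
  have hQu : Tendsto (fun ε : ℝ => δ' ε⁻¹ x (δ ε x u)) (𝓝[>] (0 : ℝ)) (𝓝 (Qx u)) :=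
    (hQ {u} isCompact_singleton).tendsto_at rfl
  set g : ℝ → X × X × X := fun ε => (x, δ' ε⁻¹ x (δ ε x u), Qx u) with hg
  have hgS : ∀ᶠ ε in 𝓝[>] (0 : ℝ), g ε ∈ S := by
    filter_upwards [hQu hK₀mem] with ε hε
    exact ⟨rfl, hε, rfl⟩
  have hgtend : Tendsto g (𝓝[>] (0 : ℝ)) (𝓝[S] (x, Qx u, Qx u)) := by
    rw [tendsto_nhdsWithin_iff]
    refine ⟨?_, hgS⟩
    exact tendsto_const_nhds.prodMk_nhds (hQu.prodMk_nhds tendsto_const_nhds)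
  have hcont : ContinuousWithinAt (fun p : X × X × X => dx' p.1 p.2.1 p.2.2) S
      (x, Qx u, Qx u) := hdxcont.continuousWithinAt
  have hmain := (hA3' S hScpt).tendsto_comp hcont hgtend
  rw [hzero (Qx u)] at hmain
  -- identify the functions eventually
  have heq : ∀ᶠ ε in 𝓝[>] (0 : ℝ),
      (1 / ε) * dist (δ' ε (g ε).1 (g ε).2.1) (δ' ε (g ε).1 (g ε).2.2)
        = (1 / ε) * dist (δ ε x u) (δ' ε x (Qx u)) := by
    filter_upwards [self_mem_nhdsWithin] with ε (hε : 0 < ε)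
    have : δ' ε x (δ' ε⁻¹ x (δ ε x u)) = δ ε x u := by
      rw [hcomp' ε ε⁻¹ hε (inv_pos.mpr hε), mul_inv_cancel₀ (ne_of_gt hε), hone']
    simp [hg, this]
  exact Tendsto.congr' heq hmain
end

section
/- Let (G, δ, ‖·‖) be a locally compact normed group with dilatations. Then the group operation is differentiable at the identity with derivative β: for all u, v ∈ G, lim_{ε→0+} (1/ε) · ‖ (δ_ε β(u, v))⁻¹ · (δ_ε u)(δ_ε v) ‖ = 0, uniformly with respect to (u, v) in compact sets. -/
open Filter Topology

open Set Uniformity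

/-!
Write `z_ε = δ_{1/ε} ((δ_ε β(u,v))⁻¹ (δ_ε u)(δ_ε v))`, so that the quantity to estimate is
`(1/ε) ‖δ_ε z_ε‖`. Since `δ_ε ∘ δ_{1/ε} = id`, `z_ε = δ_{1/ε} ((δ_ε a_ε)(δ_ε w_ε))` with
`a_ε = δ_{1/ε} ((δ_ε β(u,v))⁻¹) → β(u,v)⁻¹` by (H2) and `w_ε = δ_{1/ε} ((δ_ε u)(δ_ε v)) → β(u,v)`
by (H1). The convergence in (H1) being locally uniform, moving arguments may be plugged in, so
`z_ε → β(β(u,v)⁻¹, β(u,v)) = 1` uniformly, and then `(1/ε) ‖δ_ε z_ε‖ → ‖1‖^N = 0` in the same way.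

Both `β(x⁻¹, x) = 1` and `δ_ε 1 = 1` come from the same trick: for every `x`,
`δ_{1/ε} 1 = δ_{1/ε} ((δ_ε a_ε)(δ_ε x))` with `a_ε → x⁻¹`, so `δ_{1/ε} 1 → β(x⁻¹, x)`. This limit
does not depend on `x`, is fixed by every `δ_s`, and hence equals `1` by (H0).
-/

theorem TendstoLocallyUniformly.tendstoUniformlyOn_comp {ι α β γ : Type*} {l : Filter ι}
    [UniformSpace α] [LocallyCompactSpace α] [UniformSpace β] [TopologicalSpace γ]
    {F : ι → α → β} {f : α → β} (hF : TendstoLocallyUniformly F f l) (hf : Continuous f)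
    {g : ι → γ → α} {g₀ : γ → α} {K : Set γ} (hg : TendstoUniformlyOn g g₀ l K)
    (hK : IsCompact K) (hg₀ : ContinuousOn g₀ K) :
    TendstoUniformlyOn (fun i x => F i (g i x)) (fun x => f (g₀ x)) l K := by
  have hK₀ : IsCompact (g₀ '' K) := hK.image_of_continuousOn hg₀
  obtain ⟨M, hM, hKM⟩ := exists_compact_superset hK₀
  have hgM : ∀ᶠ i in l, ∀ x ∈ K, g i x ∈ M := by
    obtain ⟨V, hV, -, hVM⟩ := lebesgue_number_of_compact_open hK₀ isOpen_interior hKM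
    filter_upwards [hg V hV] with i hi x hx
    exact interior_subset (hVM _ (mem_image_of_mem g₀ hx) (hi x hx))
  intro u hu
  obtain ⟨u₁, hu₁, hu₁u⟩ := comp_mem_uniformity_sets hu
  have hfM : {q : α × α | q ∈ M ×ˢ M → (f q.1, f q.2) ∈ u₁} ∈ 𝓤 α :=
    mem_inf_principal.1 (hM.uniformContinuousOn_of_continuous hf.continuousOn hu₁)
  filter_upwards [tendstoLocallyUniformly_iff_forall_isCompact.1 hF M hM u₁ hu₁, hg _ hfM, hgM]
    with i hFi hgi hgMi x hx
  have hg₀M : g₀ x ∈ M := interior_subset (hKM (mem_image_of_mem g₀ hx))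
  exact hu₁u (SetRel.prodMk_mem_comp (hgi x hx ⟨hg₀M, hgMi x hx⟩) (hFi _ (hgMi x hx)))

theorem TendstoUniformlyOn.prodMk_of_same_filter {ι α β γ : Type*} {l : Filter ι}
    [UniformSpace β] [UniformSpace γ] {F : ι → α → β} {f : α → β} {G : ι → α → γ} {g : α → γ}
    {K : Set α} (hF : TendstoUniformlyOn F f l K) (hG : TendstoUniformlyOn G g l K) :
    TendstoUniformlyOn (fun i x => (F i x, G i x)) (fun x => (f x, g x)) l K := fun u hu =>
  (tendsto_id.prodMk tendsto_id).eventually (hF.prodMk hG u hu)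

/-- The axioms (H0)–(H2) of dilatations, `β` being the limit in (H1). -/
structure IsDilatationFamily {G : Type*} [Group G] [UniformSpace G] (δ : ℝ → G → G)
    (β : G → G → G) : Prop where
  continuous : ∀ ε : ℝ, 0 < ε → Continuous (δ ε)
  comp : ∀ ε μ : ℝ, 0 < ε → 0 < μ → ∀ x : G, δ ε (δ μ x) = δ (ε * μ) x
  one : ∀ x : G, δ 1 x = x
  tendsto_one : TendstoLocallyUniformly (fun (ε : ℝ) (x : G) => δ ε x) (fun _ => 1) (𝓝[>] 0)
  tendsto_mul : TendstoLocallyUniformly (fun (ε : ℝ) (p : G × G) => δ ε⁻¹ (δ ε p.1 * δ ε p.2))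
    (fun p => β p.1 p.2) (𝓝[>] 0)
  tendsto_inv : TendstoLocallyUniformly (fun (ε : ℝ) (x : G) => δ ε⁻¹ ((δ ε x)⁻¹))
    (fun x => x⁻¹) (𝓝[>] 0)

namespace IsDilatationFamily

variable {G : Type*} [Group G] [UniformSpace G] {δ : ℝ → G → G} {β : G → G → G}

theorem apply_inv_apply (hδ : IsDilatationFamily δ β) {ε : ℝ} (hε : 0 < ε) (x : G) :
    δ ε (δ ε⁻¹ x) = x := by
  rw [hδ.comp ε ε⁻¹ hε (inv_pos.2 hε), mul_inv_cancel₀ hε.ne', hδ.one]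

theorem apply_eq_self_of_tendsto [T2Space G] (hδ : IsDilatationFamily δ β) {y c : G}
    (h : Tendsto (fun ε => δ ε⁻¹ y) (𝓝[>] 0) (𝓝 c)) {s : ℝ} (hs : 0 < s) : δ s c = c := by
  have hdiv : Tendsto (fun ε : ℝ => ε / s) (𝓝[>] 0) (𝓝[>] 0) := by
    have := ((continuous_id.div_const s).tendsto' 0 0 (zero_div s)).mono_left
      (nhdsWithin_le_nhds (s := Ioi 0))
    exact tendsto_nhdsWithin_of_tendsto_nhds_of_eventually_within _ this
      (eventually_mem_nhdsWithin.mono fun ε hε => div_pos hε hs)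
  refine tendsto_nhds_unique (((hδ.continuous s hs).tendsto c).comp h) ((h.comp hdiv).congr' ?_)
  filter_upwards [eventually_mem_nhdsWithin] with ε hε
  rw [Function.comp_apply, Function.comp_apply, hδ.comp s ε⁻¹ hs (inv_pos.2 hε), inv_div,
    div_eq_mul_inv]

theorem continuous_beta [ContinuousMul G] (hδ : IsDilatationFamily δ β) :
    Continuous fun p : G × G => β p.1 p.2 :=
  hδ.tendsto_mul.continuous <| Eventually.frequently <|
    eventually_mem_nhdsWithin.mono fun ε (hε : 0 < ε) =>
      (hδ.continuous ε⁻¹ (inv_pos.2 hε)).comp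
        (((hδ.continuous ε hε).comp continuous_fst).mul ((hδ.continuous ε hε).comp continuous_snd))

theorem tendsto_inv_apply_one [ContinuousMul G] (hδ : IsDilatationFamily δ β) (x : G) :
    Tendsto (fun ε : ℝ => δ ε⁻¹ 1) (𝓝[>] 0) (𝓝 (β x⁻¹ x)) := by
  have ha : Tendsto (fun ε : ℝ => δ ε⁻¹ (δ ε x)⁻¹) (𝓝[>] 0) (𝓝 x⁻¹) :=
    hδ.tendsto_inv.tendstoLocallyUniformlyOn.tendsto_at (mem_univ x)
  refine (hδ.tendsto_mul.tendsto_comp (g := fun ε => (δ ε⁻¹ (δ ε x)⁻¹, x))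
    hδ.continuous_beta.continuousAt (ha.prodMk_nhds tendsto_const_nhds)).congr' ?_
  filter_upwards [eventually_mem_nhdsWithin] with ε hε
  rw [hδ.apply_inv_apply hε, inv_mul_cancel]

theorem tendsto_inv_apply_one_nhds_one [ContinuousMul G] [T2Space G]
    (hδ : IsDilatationFamily δ β) : Tendsto (fun ε : ℝ => δ ε⁻¹ 1) (𝓝[>] 0) (𝓝 1) := by
  have h := hδ.tendsto_inv_apply_one 1
  have hfixed : Tendsto (fun s : ℝ => δ s (β 1⁻¹ 1)) (𝓝[>] 0) (𝓝 (β 1⁻¹ 1)) :=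
    tendsto_const_nhds.congr' <| eventually_mem_nhdsWithin.mono fun s hs =>
      (hδ.apply_eq_self_of_tendsto h hs).symm
  rwa [tendsto_nhds_unique hfixed (hδ.tendsto_one.tendstoLocallyUniformlyOn.tendsto_at
    (mem_univ _))] at h

theorem beta_inv_self [ContinuousMul G] [T2Space G] (hδ : IsDilatationFamily δ β) (x : G) :
    β x⁻¹ x = 1 :=
  tendsto_nhds_unique (hδ.tendsto_inv_apply_one x) hδ.tendsto_inv_apply_one_nhds_one

theorem apply_one [ContinuousMul G] [T2Space G] (hδ : IsDilatationFamily δ β) {ε : ℝ}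
    (hε : 0 < ε) : δ ε 1 = 1 :=
  hδ.apply_eq_self_of_tendsto hδ.tendsto_inv_apply_one_nhds_one hε

theorem tendstoUniformlyOn_rescaled_error [IsUniformGroup G] [LocallyCompactSpace G] [T2Space G]
    (hδ : IsDilatationFamily δ β) {K : Set (G × G)} (hK : IsCompact K) :
    TendstoUniformlyOn
      (fun (ε : ℝ) (p : G × G) => δ ε⁻¹ ((δ ε (β p.1 p.2))⁻¹ * (δ ε p.1 * δ ε p.2)))
      (fun _ => 1) (𝓝[>] 0) K := by
  have hB : ContinuousOn (fun p : G × G => β p.1 p.2) K := hδ.continuous_beta.continuousOn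
  have ha : TendstoUniformlyOn (fun (ε : ℝ) (p : G × G) => δ ε⁻¹ (δ ε (β p.1 p.2))⁻¹)
      (fun p => (β p.1 p.2)⁻¹) (𝓝[>] 0) K :=
    ((tendstoLocallyUniformly_iff_forall_isCompact.1 hδ.tendsto_inv _
      (hK.image_of_continuousOn hB)).comp _).mono (subset_preimage_image _ _)
  have hw := tendstoLocallyUniformly_iff_forall_isCompact.1 hδ.tendsto_mul K hK
  have hz := hδ.tendsto_mul.tendstoUniformlyOn_comp hδ.continuous_beta
    (ha.prodMk_of_same_filter hw) hK (hB.inv.prodMk hB)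
  simp only [hδ.beta_inv_self] at hz
  refine hz.congr ?_
  filter_upwards [eventually_mem_nhdsWithin] with ε hε p _
  simp only [hδ.apply_inv_apply hε]

end IsDilatationFamily

theorem group_operation_differentiable_at_identity_general
    {G : Type*} [Group G] [UniformSpace G] [IsUniformGroup G]
    [LocallyCompactSpace G] [T2Space G]
    (δ : ℝ → G → G)
    (hδcont : ∀ ε : ℝ, 0 < ε → Continuous (δ ε))
    (hcomp : ∀ ε μ : ℝ, 0 < ε → 0 < μ → ∀ x : G, δ ε (δ μ x) = δ (ε * μ) x)
    (hone : ∀ x : G, δ 1 x = x)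
    (hH0 : ∀ K : Set G, IsCompact K →
      TendstoUniformlyOn (fun (ε : ℝ) (x : G) => δ ε x) (fun _ => (1 : G))
        (𝓝[>] (0 : ℝ)) K)
    (β : G → G → G)
    (hH1 : ∀ K : Set (G × G), IsCompact K →
      TendstoUniformlyOn (fun (ε : ℝ) (p : G × G) => δ ε⁻¹ (δ ε p.1 * δ ε p.2))
        (fun p => β p.1 p.2) (𝓝[>] (0 : ℝ)) K)
    (hH2 : ∀ K : Set G, IsCompact K →
      TendstoUniformlyOn (fun (ε : ℝ) (x : G) => δ ε⁻¹ ((δ ε x)⁻¹)) (fun x => x⁻¹)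
        (𝓝[>] (0 : ℝ)) K)
    (nrm : G → ℝ) (hncont : Continuous nrm)
    (hzero : ∀ x : G, nrm x = 0 ↔ x = 1)
    (nrmN : G → ℝ)
    (hnrmN : ∀ K : Set G, IsCompact K →
      TendstoUniformlyOn (fun (ε : ℝ) (x : G) => (1 / ε) * nrm (δ ε x)) nrmN
        (𝓝[>] (0 : ℝ)) K) :
    ∀ K : Set (G × G), IsCompact K →
      TendstoUniformlyOn
        (fun (ε : ℝ) (p : G × G) =>
          (1 / ε) * nrm ((δ ε (β p.1 p.2))⁻¹ * (δ ε p.1 * δ ε p.2)))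
        (fun _ => (0 : ℝ)) (𝓝[>] (0 : ℝ)) K := by
  simp only [← tendstoLocallyUniformly_iff_forall_isCompact] at hH0 hH1 hH2 hnrmN
  have hδ : IsDilatationFamily δ β := ⟨hδcont, hcomp, hone, hH0, hH1, hH2⟩
  have hNc : Continuous nrmN := hnrmN.continuous <| Eventually.frequently <|
    eventually_mem_nhdsWithin.mono fun ε hε => continuous_const.mul (hncont.comp (hδcont ε hε))
  have hN1 : nrmN 1 = 0 := by
    refine tendsto_nhds_unique (hnrmN.tendstoLocallyUniformlyOn.tendsto_at (mem_univ 1))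
      (tendsto_const_nhds.congr' ?_)
    filter_upwards [eventually_mem_nhdsWithin] with ε hε
    rw [hδ.apply_one hε, (hzero 1).2 rfl, mul_zero]
  intro K hK
  refine ((hnrmN.tendstoUniformlyOn_comp hNc (hδ.tendstoUniformlyOn_rescaled_error hK) hK
    continuousOn_const).congr ?_).congr_right fun _ _ => hN1
  filter_upwards [eventually_mem_nhdsWithin] with ε hε p _
  simp only [hδ.apply_inv_apply hε]

/-- For a locally compact normed group with dilatations
`(G, δ, ‖·‖)`, the group operation is differentiable at the identity with
derivative `β`: `lim_{ε→0+} (1/ε)·‖(δ_ε β(u,v))⁻¹ · (δ_ε u)(δ_ε v)‖ = 0`,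
uniformly for `(u, v)` in compact sets. -/
theorem group_operation_differentiable_at_identity
    {G : Type*} [Group G] [UniformSpace G] [IsUniformGroup G]
    [LocallyCompactSpace G] [T2Space G]
    (δ : ℝ → G → G)
    (hδcont : ∀ ε : ℝ, 0 < ε → Continuous (δ ε))
    (hcomp : ∀ ε μ : ℝ, 0 < ε → 0 < μ → ∀ x : G, δ ε (δ μ x) = δ (ε * μ) x)
    (hone : ∀ x : G, δ 1 x = x)
    (hH0 : ∀ K : Set G, IsCompact K →
      TendstoUniformlyOn (fun (ε : ℝ) (x : G) => δ ε x) (fun _ => (1 : G))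
        (𝓝[>] (0 : ℝ)) K)
    (β : G → G → G)
    (hH1 : ∀ K : Set (G × G), IsCompact K →
      TendstoUniformlyOn (fun (ε : ℝ) (p : G × G) => δ ε⁻¹ (δ ε p.1 * δ ε p.2))
        (fun p => β p.1 p.2) (𝓝[>] (0 : ℝ)) K)
    (hH2 : ∀ K : Set G, IsCompact K →
      TendstoUniformlyOn (fun (ε : ℝ) (x : G) => δ ε⁻¹ ((δ ε x)⁻¹)) (fun x => x⁻¹)
        (𝓝[>] (0 : ℝ)) K)
    (nrm : G → ℝ) (hncont : Continuous nrm)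
    (hnonneg : ∀ x : G, 0 ≤ nrm x)
    (hzero : ∀ x : G, nrm x = 0 ↔ x = 1)
    (hsub : ∀ x y : G, nrm (x * y) ≤ nrm x + nrm y)
    (hsymm : ∀ x : G, nrm x⁻¹ = nrm x)
    (nrmN : G → ℝ)
    (hnrmN : ∀ K : Set G, IsCompact K →
      TendstoUniformlyOn (fun (ε : ℝ) (x : G) => (1 / ε) * nrm (δ ε x)) nrmN
        (𝓝[>] (0 : ℝ)) K)
    (hnrmN0 : ∀ x : G, nrmN x = 0 → x = 1) :
    ∀ K : Set (G × G), IsCompact K →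
      TendstoUniformlyOn
        (fun (ε : ℝ) (p : G × G) =>
          (1 / ε) * nrm ((δ ε (β p.1 p.2))⁻¹ * (δ ε p.1 * δ ε p.2)))
        (fun _ => (0 : ℝ)) (𝓝[>] (0 : ℝ)) K :=
  group_operation_differentiable_at_identity_general δ hδcont hcomp hone hH0 β hH1 hH2 nrm hncont
    hzero nrmN hnrmN
end
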